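/- arXiv:1810.02352 — 8 statements merged into one kernel-verified Lean document; each statement's English description precedes it below -/
import Mathlib

section
/- For all v1, v2, v3 ∈ {0,1}, one has (−1)^{v1·v2·v3} = e^{iπ(v1+v2+v3)} · ( 1/3 + (4/3)·cos( (4π/3)·(v1+v2+v3) − π/3 ) ). -/
open Complex Real

lemma cos_aux0 : Real.cos (4 * Real.pi / 3 * ((0:ℕ):ℝ) - Real.pi / 3) = 1/2 := by
  rw [show 4 * Real.pi / 3 * ((0:ℕ):ℝ) - Real.pi / 3 = -(Real.pi/3) by push_cast; ring,
    Real.cos_neg, Real.cos_pi_div_three]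

lemma cos_aux1 : Real.cos (4 * Real.pi / 3 * ((1:ℕ):ℝ) - Real.pi / 3) = -1 := by
  rw [show 4 * Real.pi / 3 * ((1:ℕ):ℝ) - Real.pi / 3 = Real.pi by push_cast; ring,
    Real.cos_pi]

lemma cos_aux2 : Real.cos (4 * Real.pi / 3 * ((2:ℕ):ℝ) - Real.pi / 3) = 1/2 := by
  rw [show 4 * Real.pi / 3 * ((2:ℕ):ℝ) - Real.pi / 3 = Real.pi/3 + 2*Real.pi by push_cast; ring,
    Real.cos_add_two_pi, Real.cos_pi_div_three]

lemma cos_aux3 : Real.cos (4 * Real.pi / 3 * ((3:ℕ):ℝ) - Real.pi / 3) = 1/2 := by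
  rw [show 4 * Real.pi / 3 * ((3:ℕ):ℝ) - Real.pi / 3 = (-(Real.pi/3) + 2*Real.pi) + 2*Real.pi
      by push_cast; ring,
    Real.cos_add_two_pi, Real.cos_add_two_pi, Real.cos_neg, Real.cos_pi_div_three]

lemma exp_I_pi_n (n : ℕ) : Complex.exp (Complex.I * Real.pi * n) = (-1)^n := by
  have : Complex.I * Real.pi * n = n * (Real.pi * Complex.I) := by ring
  rw [this, Complex.exp_nat_mul, Complex.exp_pi_mul_I]

lemma aux (n : ℕ) (hn : n ≤ 3) :
    Complex.exp (Complex.I * Real.pi * n) *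
      ((1 / 3 : ℂ) + (4 / 3) * (Real.cos ((4 * Real.pi / 3) * (n:ℝ) - Real.pi / 3) : ℂ))
    = if n = 3 then -1 else 1 := by
  rw [exp_I_pi_n]
  interval_cases n
  · rw [cos_aux0]; norm_num
  · rw [cos_aux1]; norm_num
  · rw [cos_aux2]; norm_num
  · rw [cos_aux3]; norm_num

/-- For all `v1, v2, v3 ∈ {0,1}`,
`(−1)^{v1·v2·v3} = e^{iπ(v1+v2+v3)} · (1/3 + (4/3)·cos((4π/3)(v1+v2+v3) − π/3))`. -/
theorem three_body_phase_cos_identity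
    (v1 v2 v3 : ℕ) (hv1 : v1 ∈ ({0, 1} : Set ℕ)) (hv2 : v2 ∈ ({0, 1} : Set ℕ))
    (hv3 : v3 ∈ ({0, 1} : Set ℕ)) :
    ((-1 : ℂ) ^ (v1 * v2 * v3)) =
      Complex.exp (Complex.I * Real.pi * ((v1 : ℂ) + v2 + v3)) *
        ((1 / 3 : ℂ) +
          (4 / 3) * (Real.cos ((4 * Real.pi / 3) * ((v1 : ℝ) + v2 + v3) - Real.pi / 3) : ℂ)) := by
  simp only [Set.mem_insert_iff, Set.mem_singleton_iff] at hv1 hv2 hv3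
  have e1 : ((v1 : ℂ) + v2 + v3) = ((v1 + v2 + v3 : ℕ) : ℂ) := by push_cast; ring
  have e2 : ((v1 : ℝ) + v2 + v3) = ((v1 + v2 + v3 : ℕ) : ℝ) := by push_cast; ring
  have hn : v1 + v2 + v3 ≤ 3 := by
    rcases hv1 with rfl|rfl <;> rcases hv2 with rfl|rfl <;> rcases hv3 with rfl|rfl <;> norm_num
  rw [e1, e2, aux (v1 + v2 + v3) hn]
  rcases hv1 with rfl|rfl <;> rcases hv2 with rfl|rfl <;> rcases hv3 with rfl|rfl <;> norm_num
end

section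
/- Define W_H(v,h) = iπ/8 − (ln 2)/2 − (π/2)·i·v − (π/4)·i·h + iπ·v·h for v, h ∈ {0,1}. Then for all v1, v2 ∈ {0,1}: Σ_{h∈{0,1}} exp( W_H(v1,h) + W_H(v2,h) ) = (−1)^{v1·v2} / √2. -/
open Complex Real

/-- The single-hidden-neuron weight function
`W_H(v,h) = iπ/8 − (ln 2)/2 − (π/2)i v − (π/4)i h + iπ v h`. -/
noncomputable def WH (v h : ℕ) : ℂ :=
  Complex.I * Real.pi / 8 - (Real.log 2) / 2 - (Real.pi / 2) * Complex.I * v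
    - (Real.pi / 4) * Complex.I * h + Complex.I * Real.pi * v * h

lemma key (θ : ℝ) : Complex.exp ((θ : ℂ) * Complex.I - Complex.log 2) =
    ((Real.cos θ : ℂ) + (Real.sin θ : ℂ) * Complex.I) / 2 := by
  have hlog : Complex.log 2 = ((Real.log 2 : ℝ) : ℂ) := by
    rw [Complex.ofReal_log (by norm_num : (0:ℝ) ≤ 2)]; norm_num
  rw [hlog, sub_eq_add_neg, Complex.exp_add, Complex.exp_mul_I]
  have h2 : Complex.exp (-((Real.log 2 : ℝ) : ℂ)) = 1 / 2 := by
    rw [show (-((Real.log 2:ℝ) : ℂ)) = ((-Real.log 2 : ℝ) : ℂ) by push_cast; ring,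
      ← Complex.ofReal_exp, Real.exp_neg, Real.exp_log (by norm_num)]
    norm_num
  rw [h2]; push_cast; ring

lemma cos34 : Real.cos (3 * Real.pi / 4) = -(Real.sqrt 2 / 2) := by
  rw [show 3 * Real.pi / 4 = Real.pi - Real.pi / 4 by ring, Real.cos_pi_sub,
    Real.cos_pi_div_four]

lemma sin34 : Real.sin (3 * Real.pi / 4) = Real.sqrt 2 / 2 := by
  rw [show 3 * Real.pi / 4 = Real.pi - Real.pi / 4 by ring, Real.sin_pi_sub,
    Real.sin_pi_div_four]

/-- For all `v1, v2 ∈ {0,1}`,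
`Σ_{h∈{0,1}} exp(W_H(v1,h) + W_H(v2,h)) = (−1)^{v1·v2} / √2`. -/
theorem graph_edge_weight_function
    (v1 v2 : ℕ) (hv1 : v1 ∈ ({0, 1} : Set ℕ)) (hv2 : v2 ∈ ({0, 1} : Set ℕ)) :
    ∑ h ∈ ({0, 1} : Finset ℕ), Complex.exp (WH v1 h + WH v2 h) =
      (-1 : ℂ) ^ (v1 * v2) / (Real.sqrt 2 : ℂ) := by
  have hs : Real.sqrt 2 * Real.sqrt 2 = 2 := Real.mul_self_sqrt (by norm_num)
  have hs0 : (Real.sqrt 2 : ℝ) ≠ 0 := by positivity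
  simp only [Set.mem_insert_iff, Set.mem_singleton_iff] at hv1 hv2
  rcases hv1 with rfl | rfl <;> rcases hv2 with rfl | rfl <;>
    simp only [WH, Finset.sum_insert, Finset.mem_singleton, Finset.sum_singleton,
      Nat.cast_zero, Nat.cast_one, mul_zero, mul_one, zero_mul, one_mul] <;>
    norm_num
  · rw [show Complex.I * (Real.pi:ℂ) / 8 - Complex.log 2 / 2 +
        (Complex.I * (Real.pi:ℂ) / 8 - Complex.log 2 / 2)
        = ((Real.pi / 4 : ℝ) : ℂ) * Complex.I - Complex.log 2 by push_cast; ring,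
      show Complex.I * (Real.pi:ℂ) / 8 - Complex.log 2 / 2 - (Real.pi:ℂ) / 4 * Complex.I +
        (Complex.I * (Real.pi:ℂ) / 8 - Complex.log 2 / 2 - (Real.pi:ℂ) / 4 * Complex.I)
        = ((-(Real.pi / 4) : ℝ) : ℂ) * Complex.I - Complex.log 2 by push_cast; ring,
      key, key, Real.cos_neg, Real.sin_neg, Real.cos_pi_div_four, Real.sin_pi_div_four]
    rw [inv_eq_one_div, eq_div_iff (by exact_mod_cast hs0 : ((Real.sqrt 2:ℝ):ℂ) ≠ 0)]
    have hc2 : ((Real.sqrt 2:ℝ):ℂ) * ((Real.sqrt 2:ℝ):ℂ) = 2 := by exact_mod_cast hs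
    push_cast
    linear_combination hc2 / 2
  · rw [show Complex.I * (Real.pi:ℂ) / 8 - Complex.log 2 / 2 +
        (Complex.I * (Real.pi:ℂ) / 8 - Complex.log 2 / 2 - (Real.pi:ℂ) / 2 * Complex.I)
        = ((-(Real.pi / 4) : ℝ) : ℂ) * Complex.I - Complex.log 2 by push_cast; ring,
      show Complex.I * (Real.pi:ℂ) / 8 - Complex.log 2 / 2 - (Real.pi:ℂ) / 4 * Complex.I +
        (Complex.I * (Real.pi:ℂ) / 8 - Complex.log 2 / 2 - (Real.pi:ℂ) / 2 * Complex.I -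
          (Real.pi:ℂ) / 4 * Complex.I + Complex.I * (Real.pi:ℂ))
        = ((Real.pi / 4 : ℝ) : ℂ) * Complex.I - Complex.log 2 by push_cast; ring,
      key, key, Real.cos_neg, Real.sin_neg, Real.cos_pi_div_four, Real.sin_pi_div_four]
    rw [inv_eq_one_div, eq_div_iff (by exact_mod_cast hs0 : ((Real.sqrt 2:ℝ):ℂ) ≠ 0)]
    have hc2 : ((Real.sqrt 2:ℝ):ℂ) * ((Real.sqrt 2:ℝ):ℂ) = 2 := by exact_mod_cast hs
    push_cast
    linear_combination hc2 / 2
  · rw [show Complex.I * (Real.pi:ℂ) / 8 - Complex.log 2 / 2 - (Real.pi:ℂ) / 2 * Complex.I +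
        (Complex.I * (Real.pi:ℂ) / 8 - Complex.log 2 / 2)
        = ((-(Real.pi / 4) : ℝ) : ℂ) * Complex.I - Complex.log 2 by push_cast; ring,
      show Complex.I * (Real.pi:ℂ) / 8 - Complex.log 2 / 2 - (Real.pi:ℂ) / 2 * Complex.I -
          (Real.pi:ℂ) / 4 * Complex.I + Complex.I * (Real.pi:ℂ) +
        (Complex.I * (Real.pi:ℂ) / 8 - Complex.log 2 / 2 - (Real.pi:ℂ) / 4 * Complex.I)
        = ((Real.pi / 4 : ℝ) : ℂ) * Complex.I - Complex.log 2 by push_cast; ring,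
      key, key, Real.cos_neg, Real.sin_neg, Real.cos_pi_div_four, Real.sin_pi_div_four]
    rw [inv_eq_one_div, eq_div_iff (by exact_mod_cast hs0 : ((Real.sqrt 2:ℝ):ℂ) ≠ 0)]
    have hc2 : ((Real.sqrt 2:ℝ):ℂ) * ((Real.sqrt 2:ℝ):ℂ) = 2 := by exact_mod_cast hs
    push_cast
    linear_combination hc2 / 2
  · rw [show Complex.I * (Real.pi:ℂ) / 8 - Complex.log 2 / 2 - (Real.pi:ℂ) / 2 * Complex.I +
        (Complex.I * (Real.pi:ℂ) / 8 - Complex.log 2 / 2 - (Real.pi:ℂ) / 2 * Complex.I)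
        = ((-(3 * Real.pi / 4) : ℝ) : ℂ) * Complex.I - Complex.log 2 by push_cast; ring,
      show Complex.I * (Real.pi:ℂ) / 8 - Complex.log 2 / 2 - (Real.pi:ℂ) / 2 * Complex.I -
          (Real.pi:ℂ) / 4 * Complex.I + Complex.I * (Real.pi:ℂ) +
        (Complex.I * (Real.pi:ℂ) / 8 - Complex.log 2 / 2 - (Real.pi:ℂ) / 2 * Complex.I -
          (Real.pi:ℂ) / 4 * Complex.I + Complex.I * (Real.pi:ℂ))
        = ((3 * Real.pi / 4 : ℝ) : ℂ) * Complex.I - Complex.log 2 by push_cast; ring,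
      key, key, Real.cos_neg, Real.sin_neg, cos34, sin34]
    rw [eq_div_iff (by exact_mod_cast hs0 : ((Real.sqrt 2:ℝ):ℂ) ≠ 0)]
    have hc2 : ((Real.sqrt 2:ℝ):ℂ) * ((Real.sqrt 2:ℝ):ℂ) = 2 := by exact_mod_cast hs
    push_cast
    linear_combination -hc2 / 2
end

section
/- There exists a constant c ∈ ℕ such that for every integer k ≥ 1, the function f : {0,1}^k → ℂ defined by f(v) = (−1)^{v1·v2·⋯·vk} is exactly representable by an RBM with at most 2k + c hidden neurons. -/
open Complex

/-- A function `f : {0,1}^n → ℂ` is exactly representable by a restricted Boltzmann machine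
with `m` hidden neurons if there are complex parameters `a i`, `b j`, `W i j` and a nonzero
constant `C` with
`f v = C · exp(∑ i, a i v i) · ∏ j, (1 + exp(b j + ∑ i, W i j v i))` for all `v ∈ {0,1}^n`. -/
def RBMRepresentable (n m : ℕ) (f : (Fin n → Bool) → ℂ) : Prop :=
  ∃ (C : ℂ) (a : Fin n → ℂ) (b : Fin m → ℂ) (W : Fin n → Fin m → ℂ),
    C ≠ 0 ∧ ∀ v : Fin n → Bool,
      f v = C * Complex.exp (∑ i, a i * (if v i then 1 else 0)) *
        ∏ j, (1 + Complex.exp (b j + ∑ i, W i j * (if v i then 1 else 0)))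

open Polynomial Finset

/-!
With `a = 0` and all weights `W i j = 1`, an RBM evaluates `C * ∏ j, (1 + exp (b j) * z)` at
`z = exp w`, where `w` is the Hamming weight of `v`. Over `ℂ` every polynomial with nonzero
constant term factors in this form, since `z - r = -r * (1 + exp (log (-r⁻¹)) * z)`. The
hyperedge factor only depends on `w ∈ {0, …, k}`, so it suffices to interpolate it at the
distinct nodes `exp 0, …, exp k`, together with the value `1` at `0`: this needs degree `k + 1`.
-/

theorem Complex.sub_eq_neg_mul_one_add_exp_log_mul {a : ℂ} (ha : a ≠ 0) (z : ℂ) :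
    z - a = -a * (1 + exp (log (-a⁻¹)) * z) := by
  rw [exp_log (neg_ne_zero.mpr (inv_ne_zero ha))]
  field_simp
  ring

theorem List.exists_prod_map_sub_eq_mul_prod_one_add_exp_mul (l : List ℂ) (hl : 0 ∉ l) :
    ∃ (C : ℂ) (b : Fin l.length → ℂ), C ≠ 0 ∧
      ∀ z, (l.map (z - ·)).prod = C * ∏ j, (1 + exp (b j) * z) := by
  have hne (j : Fin l.length) : l[j.1] ≠ 0 := fun h => hl (h ▸ List.getElem_mem _)
  refine ⟨∏ j : Fin l.length, -l[j.1], fun j => log (-(l[j.1])⁻¹),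
    prod_ne_zero_iff.mpr fun j _ => neg_ne_zero.mpr (hne j), fun z => ?_⟩
  rw [← Fin.prod_univ_fun_getElem, ← prod_mul_distrib]
  exact prod_congr rfl fun j _ => sub_eq_neg_mul_one_add_exp_log_mul (hne j) z

theorem Polynomial.exists_eval_eq_mul_prod_one_add_exp_mul (p : ℂ[X]) (hp : p.eval 0 ≠ 0) :
    ∃ m ≤ p.natDegree, ∃ (C : ℂ) (b : Fin m → ℂ), C ≠ 0 ∧
      ∀ z, p.eval z = C * ∏ j, (1 + exp (b j) * z) := by
  have hp0 : p ≠ 0 := by rintro rfl; simp at hp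
  have hroots : 0 ∉ p.roots.toList := by
    simpa [Multiset.mem_toList, mem_roots hp0] using hp
  obtain ⟨C, b, hC, hprod⟩ :=
    p.roots.toList.exists_prod_map_sub_eq_mul_prod_one_add_exp_mul hroots
  refine ⟨_, (Multiset.length_toList _).trans_le (card_roots' p), p.leadingCoeff * C, b,
    mul_ne_zero (leadingCoeff_ne_zero.mpr hp0) hC, fun z => ?_⟩
  rw [(IsAlgClosed.splits p).eval_eq_prod_roots, mul_assoc, ← hprod]
  conv_lhs => rw [← Multiset.coe_toList p.roots, Multiset.map_coe, Multiset.prod_coe]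

theorem Polynomial.exists_eval_zero_eq_one_and_eval_eq {F ι : Type*} [Field F] [Fintype ι]
    {x : ι → F} (hx : Function.Injective x) (hx0 : ∀ i, x i ≠ 0) (y : ι → F) :
    ∃ p : F[X], p.natDegree ≤ Fintype.card ι ∧ p.eval 0 = 1 ∧ ∀ i, p.eval (x i) = y i := by
  classical
  set node : Option ι → F := fun o => o.elim 0 x
  have hinj : Set.InjOn node (univ : Finset (Option ι)) := by
    rintro (_ | i) - (_ | j) - h
    exacts [rfl, (hx0 j h.symm).elim, (hx0 i h).elim, congrArg some (hx h)]
  set p := Lagrange.interpolate univ node (fun o => o.elim 1 y)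
  refine ⟨p, ?_, Lagrange.eval_interpolate_at_node _ hinj (mem_univ none),
    fun i => Lagrange.eval_interpolate_at_node _ hinj (mem_univ (some i))⟩
  have := Lagrange.degree_interpolate_le (fun o => o.elim 1 y) hinj
  rw [card_univ, Fintype.card_option, Nat.add_sub_cancel] at this
  exact natDegree_le_iff_degree_le.mpr this

theorem Complex.exp_natCast_injective : Function.Injective fun n : ℕ => exp (n : ℂ) := by
  intro s t h
  simp only [← ofReal_natCast, ← ofReal_exp, ofReal_inj, Real.exp_eq_exp, Nat.cast_inj] at h
  exact h

theorem rbmRepresentable_comp_card_filter (n : ℕ) (g : ℕ → ℂ) :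
    ∃ m ≤ n + 1, RBMRepresentable n m fun v => g #{i | v i} := by
  obtain ⟨p, hdeg, hp0, hp⟩ := exists_eval_zero_eq_one_and_eval_eq
    (exp_natCast_injective.comp Fin.val_injective) (fun _ => exp_ne_zero _)
    fun s : Fin (n + 1) => g s
  obtain ⟨m, hm, C, b, hC, hrep⟩ := p.exists_eval_eq_mul_prod_one_add_exp_mul (by simp [hp0])
  refine ⟨m, hm.trans (by simpa using hdeg), C, 0, b, fun _ _ => 1, hC, fun v => ?_⟩
  have hw : #{i | v i} < n + 1 := Nat.lt_succ_of_le ((card_filter_le _ _).trans_eq (card_fin n))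
  simp only [Pi.zero_apply, zero_mul, one_mul, sum_const_zero, exp_zero, mul_one, sum_boole,
    exp_add]
  rw [← hrep]
  exact (hp ⟨_, hw⟩).symm

/-- There is a constant `c` such that for every `k ≥ 1`, the `k`-hyperedge
correlation factor `f(v) = (−1)^{v1 v2 ⋯ vk}` is exactly representable by an RBM with at most
`2k + c` hidden neurons. -/
theorem hyperedge_factor_representable :
    ∃ c : ℕ, ∀ k : ℕ, 1 ≤ k → ∃ m ≤ 2 * k + c,
      RBMRepresentable k m
        (fun v => (-1 : ℂ) ^ (∏ i : Fin k, (if v i then 1 else 0 : ℕ))) := by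
  refine ⟨0, fun k hk => ?_⟩
  obtain ⟨m, hm, hrep⟩ := rbmRepresentable_comp_card_filter k fun w => if w = k then -1 else 1
  refine ⟨m, by omega, ?_⟩
  convert hrep using 2 with v
  have hall : #{i | v i} = k ↔ ∀ i, v i := by simpa using card_filter_eq_iff (s := univ) (p := (v ·))
  simp [prod_boole, hall]
end

section
/- There exists a constant c ∈ ℕ such that for every n ∈ ℕ and every finite collection E of nonempty subsets of {1,…,n}, the hypergraph-state amplitude function Ψ : {0,1}^n → ℂ, Ψ(v) = ∏_{e∈E} (−1)^{∏_{i∈e} v_i}, is exactly representable by an RBM with at most ∑_{e∈E} (2·|e| + c) hidden neurons. In particular, restricted Boltzmann machines represent hypergraph states efficiently and exactly whenever |E| and the edge sizes are polynomial in n. -/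
open Complex

/-!
On a hyperedge `e` of size `k`, the amplitude factor `(-1)^{∏_{i∈e} v_i}` depends only on the
count `s = #{i ∈ e | v i} ∈ {0, …, k}`. Hidden neurons with weight `1` on `e` and bias `b_j`
contribute factors `1 + c_j x` with `x = e^s` and `c_j = e^{b_j}`, so `k + 1` of them realize
`P(x) / P(0)` for any polynomial `P` of degree `k + 1` with `P(0) ≠ 0`: over `ℂ`, `P` splits and
`c_j = -1/r_j` for its roots `r_j`. Such a `P` taking prescribed values at the `k + 1` nodes
`e^0, …, e^k` is the Lagrange interpolant plus a generic multiple of the nodal polynomial.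
Concatenating hidden layers multiplies RBM functions, so `∑_{e∈E} (|e| + 1)` neurons suffice.
-/

open Finset Polynomial

theorem Lagrange.exists_natDegree_eq_eval_zero_ne_zero {K ι : Type*} [Field K] [Infinite K]
    (s : Finset ι) {x : ι → K} (hx : Set.InjOn x s) (hx0 : ∀ i ∈ s, x i ≠ 0) (y : ι → K) :
    ∃ P : K[X], P.natDegree = #s ∧ P.eval 0 ≠ 0 ∧ ∀ i ∈ s, P.eval (x i) = y i := by
  classical
  have hN0 : (nodal s x).eval 0 ≠ 0 := eval_nodal_not_at_node fun i hi => (hx0 i hi).symm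
  obtain ⟨c, hc⟩ := Infinite.exists_notMem_finset
    ({0, -(interpolate s x y).eval 0 / (nodal s x).eval 0} : Finset K)
  have hc0 : c ≠ 0 := by aesop
  refine ⟨interpolate s x y + C c * nodal s x, ?_, fun h => hc ?_, fun i hi => ?_⟩
  · rw [natDegree_add_eq_right_of_degree_lt, natDegree_C_mul hc0, natDegree_nodal]
    rw [degree_C_mul hc0, degree_nodal]
    exact degree_interpolate_lt y hx
  · rw [eval_add, eval_mul, eval_C] at h
    rw [mem_insert, mem_singleton, eq_div_iff hN0]
    exact Or.inr (by linear_combination h)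
  · rw [eval_add, eval_mul, eval_interpolate_at_node y hx hi, eval_nodal_at_node hi, mul_zero,
      add_zero]

theorem Polynomial.Splits.eval_eq_eval_zero_mul_prod_roots {K : Type*} [Field K] {P : K[X]}
    (hP : P.Splits) (h0 : P.eval 0 ≠ 0) (x : K) :
    P.eval x = P.eval 0 * (P.roots.map fun r => 1 - x / r).prod := by
  rw [hP.eval_eq_prod_roots x, hP.eval_eq_prod_roots 0, mul_assoc, ← Multiset.prod_map_mul]
  refine congrArg (_ * ·) (congrArg _ (Multiset.map_congr rfl fun r hr => ?_))
  have hr0 : r ≠ 0 := by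
    rintro rfl
    exact h0 (isRoot_of_mem_roots hr)
  field_simp
  ring

theorem Multiset.exists_fin_map_eq {α : Type*} {s : Multiset α} {m : ℕ} (h : card s = m) :
    ∃ r : Fin m → α, univ.val.map r = s := by
  obtain ⟨l, rfl⟩ : ∃ l : List α, (l : Multiset α) = s := Quotient.exists_rep s
  subst h
  exact ⟨l.get, (Fin.univ_val_map l.get).trans (congrArg _ (List.ofFn_get l))⟩

theorem IsAlgClosed.exists_mul_prod_one_add_mul_eq {K : Type*} [Field K] [IsAlgClosed K] {m : ℕ}
    {x : Fin m → K} (hx : Function.Injective x) (hx0 : ∀ i, x i ≠ 0) (y : Fin m → K) :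
    ∃ C ≠ 0, ∃ c : Fin m → K, (∀ j, c j ≠ 0) ∧ ∀ i, C * ∏ j, (1 + c j * x i) = y i := by
  obtain ⟨P, hdeg, h0, hPy⟩ :=
    Lagrange.exists_natDegree_eq_eval_zero_ne_zero univ hx.injOn (fun i _ => hx0 i) y
  have hP := IsAlgClosed.splits P
  obtain ⟨r, hr⟩ := Multiset.exists_fin_map_eq <|
    hP.natDegree_eq_card_roots.symm.trans (hdeg.trans (card_fin m))
  have hr0 : ∀ j, r j ≠ 0 := fun j hj => h0 <| by
    have : r j ∈ P.roots := hr ▸ Multiset.mem_map_of_mem r (mem_univ j)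
    simpa [hj] using isRoot_of_mem_roots this
  refine ⟨P.eval 0, h0, fun j => -(r j)⁻¹, fun j => neg_ne_zero.2 (inv_ne_zero (hr0 j)),
    fun i => ?_⟩
  rw [← hPy i (mem_univ i), hP.eval_eq_eval_zero_mul_prod_roots h0 (x i), ← hr, Multiset.map_map,
    prod_eq_multiset_prod]
  refine congrArg _ (congrArg _ (Multiset.map_congr rfl fun j _ => ?_))
  simp only [Function.comp_apply]
  ring

theorem RBMRepresentable.mul {n m₁ m₂ : ℕ} {f g : (Fin n → Bool) → ℂ}
    (hf : RBMRepresentable n m₁ f) (hg : RBMRepresentable n m₂ g) :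
    RBMRepresentable n (m₁ + m₂) fun v => f v * g v := by
  obtain ⟨C₁, a₁, b₁, W₁, hC₁, h₁⟩ := hf
  obtain ⟨C₂, a₂, b₂, W₂, hC₂, h₂⟩ := hg
  refine ⟨C₁ * C₂, a₁ + a₂, Fin.append b₁ b₂, fun i => Fin.append (W₁ i) (W₂ i),
    mul_ne_zero hC₁ hC₂, fun v => ?_⟩
  simp only [h₁ v, h₂ v, Pi.add_apply, add_mul, sum_add_distrib, Complex.exp_add,
    Fin.prod_univ_add, Fin.append_left, Fin.append_right]
  ring

theorem RBMRepresentable.one (n : ℕ) : RBMRepresentable n 0 fun _ => 1 :=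
  ⟨1, 0, Fin.elim0, fun _ => Fin.elim0, one_ne_zero, fun v => by simp⟩

theorem RBMRepresentable.prod {n : ℕ} {ι : Type*} {s : Finset ι} {m : ι → ℕ}
    {f : ι → (Fin n → Bool) → ℂ} (hf : ∀ i ∈ s, RBMRepresentable n (m i) (f i)) :
    RBMRepresentable n (∑ i ∈ s, m i) fun v => ∏ i ∈ s, f i v := by
  classical
  induction s using Finset.induction_on with
  | empty => simpa using RBMRepresentable.one n
  | insert i s hi ih =>
    simp only [sum_insert hi, prod_insert hi]
    exact (hf i (mem_insert_self i s)).mul (ih fun j hj => hf j (mem_insert_of_mem hj))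

theorem RBMRepresentable.comp_card_filter (n : ℕ) (e : Finset (Fin n)) (y : ℕ → ℂ) :
    RBMRepresentable n (#e + 1) fun v => y #{i ∈ e | v i} := by
  have hx : Function.Injective fun t : Fin (#e + 1) => ((Real.exp t : ℝ) : ℂ) :=
    Complex.ofReal_injective.comp <| Real.exp_injective.comp <|
      Nat.cast_injective.comp Fin.val_injective
  obtain ⟨C, hC, c, hc0, hc⟩ := IsAlgClosed.exists_mul_prod_one_add_mul_eq hx
    (fun t => Complex.ofReal_ne_zero.2 (Real.exp_pos _).ne') fun t => y t
  refine ⟨C, 0, fun j => Complex.log (c j), fun i _ => if i ∈ e then 1 else 0, hC, fun v => ?_⟩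
  have hcount : ∑ i, (if i ∈ e then 1 else 0 : ℂ) * (if v i then 1 else 0) = #{i ∈ e | v i} := by
    simp [← sum_filter, inter_comm, inter_filter]
  have := hc ⟨#{i ∈ e | v i}, Nat.lt_succ_of_le (card_filter_le e _)⟩
  simp only [Pi.zero_apply, zero_mul, sum_const_zero, Complex.exp_zero, mul_one, hcount,
    Complex.exp_add, Complex.exp_log (hc0 _)]
  simpa [Complex.ofReal_exp] using this.symm

theorem neg_one_pow_prod_boole {R ι : Type*} [Monoid R] [HasDistribNeg R] (e : Finset ι)
    (v : ι → Bool) :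
    (-1 : R) ^ (∏ i ∈ e, (if v i then 1 else 0 : ℕ)) =
      if #{i ∈ e | v i} = #e then -1 else 1 := by
  simp only [prod_boole, card_filter_eq_iff]
  split_ifs <;> simp

/-- There is a constant `c` such that for every hypergraph `E` on vertices
`{1,…,n}` (a finite collection of nonempty subsets of `Fin n`), the hypergraph-state amplitude
`Ψ(v) = ∏_{e∈E} (−1)^{∏_{i∈e} v_i}` is exactly representable by an RBM with at most
`∑_{e∈E} (2|e| + c)` hidden neurons. -/
theorem hypergraph_state_representable :
    ∃ c : ℕ, ∀ (n : ℕ) (E : Finset (Finset (Fin n))), (∀ e ∈ E, e.Nonempty) →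
      ∃ m ≤ ∑ e ∈ E, (2 * e.card + c),
        RBMRepresentable n m
          (fun v => ∏ e ∈ E, (-1 : ℂ) ^ (∏ i ∈ e, (if v i then 1 else 0 : ℕ))) := by
  refine ⟨1, fun n E _ => ⟨∑ e ∈ E, (#e + 1), sum_le_sum fun e _ => by omega, ?_⟩⟩
  simp_rw [neg_one_pow_prod_boole]
  exact RBMRepresentable.prod fun e _ =>
    RBMRepresentable.comp_card_filter n e fun k => if k = #e then -1 else 1
end

section
/- The W-state amplitude function f : {0,1}^3 → ℂ, defined by f(v) = 1 if v1 + v2 + v3 = 1 and f(v) = 0 otherwise, is exactly representable by an RBM with two hidden neurons. -/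
open Complex

/-- The W-state amplitude function (the indicator of Hamming-weight-one bit
strings on three bits) is exactly representable by an RBM with two hidden neurons. -/
theorem w_state_representable :
    RBMRepresentable 3 2
      (fun v => if (∑ i, (if v i then 1 else 0 : ℕ)) = 1 then (1 : ℂ) else 0) := by
  refine ⟨1/4, fun _ => 0, ![Real.pi * I, -(Real.pi * I / 2)],
    fun _ => ![Real.pi * I, Real.pi * I / 2], by norm_num, ?_⟩
  intro v
  have hhalf : Complex.exp (Real.pi * I / 2) = I := by
    rw [show ((Real.pi : ℂ) * I / 2 : ℂ) = (Real.pi / 2 : ℝ) * I by push_cast; ring,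
      Complex.exp_mul_I, ← Complex.ofReal_cos, ← Complex.ofReal_sin,
      Real.cos_pi_div_two, Real.sin_pi_div_two]
    simp
  rcases Bool.eq_false_or_eq_true (v 0) with h0 | h0 <;>
  rcases Bool.eq_false_or_eq_true (v 1) with h1 | h1 <;>
  rcases Bool.eq_false_or_eq_true (v 2) with h2 | h2 <;>
  simp only [Fin.sum_univ_three, Fin.prod_univ_two, h0, h1, h2, if_true, if_false,
    Matrix.cons_val_zero, Matrix.cons_val_one, Matrix.head_cons, mul_one, mul_zero,
    zero_mul, add_zero, zero_add, Complex.exp_zero] <;>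
  norm_num [Complex.exp_add, Complex.exp_neg, Complex.exp_pi_mul_I, hhalf,
    Complex.inv_I, Complex.I_mul_I]
end

section
/- For all integers n ≥ 1 and 0 ≤ k ≤ n, the Dicke-state amplitude function f : {0,1}^n → ℂ, defined by f(v) = 1 if v1 + ⋯ + vn = k and f(v) = 0 otherwise, is exactly representable by an RBM with at most 2n hidden neurons. -/
/-!
The amplitude depends only on the Hamming weight `t ∈ {0, …, n}`. Give every hidden unit the
same weight `W = 2πi/(n+1)`, so its factor is `1 + c · ζ^t` with `ζ` a primitive `(n+1)`-st root
of unity, and choose `c = -ζ^(-s)`: that factor vanishes at weight `t = s` and nowhere else on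
`{0, …, n}`. One unit for each `s ≠ k`, i.e. `n` units, leaves a product that vanishes exactly
off weight `k`, and the constant `C` normalizes its value at weight `k` to `1`.
-/

open Complex

def hammingWeight {n : ℕ} (v : Fin n → Bool) : ℕ := ∑ i, if v i then 1 else 0

lemma hammingWeight_le {n : ℕ} (v : Fin n → Bool) : hammingWeight v ≤ n := by
  calc hammingWeight v ≤ ∑ _i : Fin n, 1 := Finset.sum_le_sum fun i _ => by split <;> omega
    _ = n := by simp

-- Witness: no visible biases, hidden biases `log (c s)` and every weight equal to `log z`.
lemma rbmRepresentable_prod_one_add_mul_pow_hammingWeight {n : ℕ} (S : Finset ℕ) {C z : ℂ}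
    (c : ℕ → ℂ) (hC : C ≠ 0) (hc : ∀ s ∈ S, c s ≠ 0) (hz : z ≠ 0) :
    RBMRepresentable n S.card fun v => C * ∏ s ∈ S, (1 + c s * z ^ hammingWeight v) := by
  let e := S.equivFin
  refine ⟨C, 0, fun j => log (c (e.symm j)), fun _ _ => log z, hC, fun v => ?_⟩
  have hsum : ∑ i, log z * (if v i then 1 else 0 : ℂ) = hammingWeight v * log z := by
    rw [hammingWeight, Nat.cast_sum, Finset.sum_mul]
    exact Finset.sum_congr rfl fun i _ => by split_ifs <;> simp
  have hunit (j : Fin S.card) : 1 + exp (log (c (e.symm j)) + hammingWeight v * log z) =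
      1 + c (e.symm j) * z ^ hammingWeight v := by
    rw [exp_add, exp_nat_mul, exp_log (hc _ (e.symm j).2), exp_log hz]
  simp only [Pi.zero_apply, zero_mul, Finset.sum_const_zero, exp_zero, mul_one, hsum, hunit]
  rw [← Finset.prod_coe_sort S, ← e.symm.prod_comp]

section DiagonalKernel

variable {N k : ℕ} (F : ℕ → ℕ → ℂ) (hF : ∀ s < N, ∀ t < N, F s t = 0 ↔ s = t)
include hF

lemma prod_erase_ne_zero_of_eq_zero_iff (hk : k < N) :
    ∏ s ∈ (Finset.range N).erase k, F s k ≠ 0 := by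
  refine Finset.prod_ne_zero_iff.2 fun s hs => ?_
  obtain ⟨hsk, hs⟩ := Finset.mem_erase.1 hs
  exact (hF s (Finset.mem_range.1 hs) k hk).not.2 hsk

lemma ite_eq_prod_erase_div_prod_erase_of_eq_zero_iff {t : ℕ} (hk : k < N) (ht : t < N) :
    (if t = k then 1 else 0) =
      (∏ s ∈ (Finset.range N).erase k, F s t) / ∏ s ∈ (Finset.range N).erase k, F s k := by
  split_ifs with htk
  · rw [htk, div_self (prod_erase_ne_zero_of_eq_zero_iff F hF hk)]
  · rw [Finset.prod_eq_zero (f := fun s => F s t)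
      (Finset.mem_erase.2 ⟨htk, Finset.mem_range.2 ht⟩) ((hF t ht t ht).2 rfl), zero_div]

end DiagonalKernel

lemma IsPrimitiveRoot.one_add_neg_inv_pow_mul_pow_eq_zero_iff {ζ : ℂ} {N : ℕ}
    (hζ : IsPrimitiveRoot ζ N) {s t : ℕ} (hs : s < N) (ht : t < N) :
    1 + -(ζ ^ s)⁻¹ * ζ ^ t = 0 ↔ s = t := by
  have hζs : ζ ^ s ≠ 0 := pow_ne_zero _ (hζ.ne_zero (by omega))
  rw [neg_mul, ← sub_eq_add_neg, sub_eq_zero, eq_comm, inv_mul_eq_one₀ hζs]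
  exact ⟨fun h => hζ.pow_inj hs ht h, fun h => h ▸ rfl⟩

theorem dicke_state_representable_general (n k : ℕ) (hk : k ≤ n) :
    ∃ m ≤ 2 * n,
      RBMRepresentable n m
        (fun v => if (∑ i, (if v i then 1 else 0 : ℕ)) = k then (1 : ℂ) else 0) := by
  set ζ := exp (2 * Real.pi * I / (n + 1 : ℕ))
  have hζ : IsPrimitiveRoot ζ (n + 1) := isPrimitiveRoot_exp (n + 1) n.succ_ne_zero
  set F : ℕ → ℕ → ℂ := fun s t => 1 + -(ζ ^ s)⁻¹ * ζ ^ t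
  have hζ0 : ζ ≠ 0 := hζ.ne_zero n.succ_ne_zero
  have hF : ∀ s < n + 1, ∀ t < n + 1, F s t = 0 ↔ s = t := fun s hs t ht =>
    hζ.one_add_neg_inv_pow_mul_pow_eq_zero_iff hs ht
  have hkn : k < n + 1 := by omega
  set S := (Finset.range (n + 1)).erase k
  have hS : S.card = n := by
    simp [S, Finset.card_erase_of_mem (Finset.mem_range.2 hkn)]
  have hrbm := rbmRepresentable_prod_one_add_mul_pow_hammingWeight (n := n) S
    (fun s => -(ζ ^ s)⁻¹) (inv_ne_zero (prod_erase_ne_zero_of_eq_zero_iff F hF hkn))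
    (fun s _ => neg_ne_zero.2 (inv_ne_zero (pow_ne_zero _ hζ0))) hζ0
  rw [hS] at hrbm
  refine ⟨n, by omega, ?_⟩
  convert hrbm using 2 with v
  rw [← div_eq_inv_mul]
  exact ite_eq_prod_erase_div_prod_erase_of_eq_zero_iff F hF hkn
    (Nat.lt_succ_of_le (hammingWeight_le v))

/-- For all integers `n ≥ 1` and `0 ≤ k ≤ n`, the Dicke-state amplitude
function (the indicator of Hamming-weight-`k` bit strings on `n` bits) is exactly
representable by an RBM with at most `2n` hidden neurons. -/
theorem dicke_state_representable (n k : ℕ) (hn : 1 ≤ n) (hk : k ≤ n) :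
    ∃ m ≤ 2 * n,
      RBMRepresentable n m
        (fun v => if (∑ i, (if v i then 1 else 0 : ℕ)) = k then (1 : ℂ) else 0) :=
  dicke_state_representable_general n k hk
end

section
/- Let n, r ∈ ℕ, let l(v) = l0 + ∑_{i=1}^n l_i v_i be an affine form with integer coefficients, let q(v) = ∑_{1≤i<j≤n} q_{ij} v_i v_j be a quadratic form with integer coefficients, and let L_1, …, L_r be affine forms in v with integer coefficients. Then the function Ψ : {0,1}^n → ℂ defined by Ψ(v) = i^{l(v)} · (−1)^{q(v)} · ∏_{j=1}^r [L_j(v) ≡ 0 (mod 2)] (where [P] is 1 if P holds and 0 otherwise) is exactly representable by an RBM with at most n(n−1)/2 + r hidden neurons. -/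
open Complex

/-! Functions representable by an RBM are closed under pointwise products (the hidden neurons
add up) and under multiplication by nonzero constants. With weights in `(π / 2) i ℤ` a visible
factor is `i ^ (affine form)` and a hidden neuron is `1 + i ^ (affine form)`. A parity constraint
`[L ≡ 0 mod 2] = (1 + i ^ (2 L)) / 2` then costs one neuron, and so does each term
`(-1) ^ (q x y)` of the quadratic form, by the identity
`(-1) ^ (x y) = (1 + i)⁻¹ i ^ (x + y) (1 + i ^ (1 + 2 (x + y)))` on `{0,1}²`. -/

open Real Finset

lemma zpow_sum₀ {ι G₀ : Type*} [CommGroupWithZero G₀] {a : G₀} (ha : a ≠ 0) (s : Finset ι)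
    (k : ι → ℤ) : a ^ (∑ i ∈ s, k i) = ∏ i ∈ s, a ^ k i := by
  induction s using Finset.cons_induction with
  | empty => simp
  | cons i s _ ih => rw [sum_cons, prod_cons, zpow_add₀ ha, ih]

lemma Fin.sum_sum_ite_lt (n : ℕ) :
    ∑ i : Fin n, ∑ j : Fin n, (if i < j then 1 else 0) = n * (n - 1) / 2 := by
  simp_rw [sum_boole, Nat.cast_id, filter_lt_eq_Ioi, Fin.card_Ioi]
  rw [Fin.sum_univ_eq_sum_range (fun i => n - 1 - i), sum_range_reflect (fun i => i),
    sum_range_id]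

lemma Complex.exp_int_mul_pi_div_two_mul_I (k : ℤ) : exp (k * (π / 2 * I)) = I ^ k := by
  rw [exp_int_mul, exp_pi_div_two_mul_I]

lemma Complex.exp_affine_mul_pi_div_two_mul_I {n : ℕ} (k₀ : ℤ) (k : Fin n → ℤ)
    (v : Fin n → Bool) :
    exp (k₀ * (π / 2 * I) + ∑ i, k i * (π / 2 * I) * (if v i then 1 else 0)) =
      I ^ (k₀ + ∑ i, k i * (if v i then 1 else 0)) := by
  rw [← exp_int_mul_pi_div_two_mul_I]
  push_cast
  rw [add_mul, sum_mul]
  congr 2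
  exact sum_congr rfl fun i _ => mul_right_comm _ _ _

lemma Complex.ite_emod_two_eq_inv_two_mul_one_add_I_zpow (k : ℤ) :
    (if k % 2 = 0 then (1 : ℂ) else 0) = 2⁻¹ * (1 + I ^ (2 * k)) := by
  rw [zpow_mul, show I ^ (2 : ℤ) = -1 from I_sq]
  rcases Int.even_or_odd k with h | h
  · rw [if_pos (Int.even_iff.mp h), h.neg_one_zpow]; norm_num
  · rw [if_neg (by rw [Int.odd_iff] at h; omega), h.neg_one_zpow]; norm_num

lemma Complex.one_add_I_ne_zero : 1 + I ≠ 0 := fun h => by simpa using congrArg re h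

lemma Complex.neg_one_zpow_mul_mul (q : ℤ) (x y : Bool) :
    (-1 : ℂ) ^ (q * (if x then 1 else 0) * (if y then 1 else 0)) =
      (1 + I)⁻¹ * (I ^ (q % 2 * (if x then 1 else 0) + q % 2 * (if y then 1 else 0)) *
        (1 + I ^ (1 + 2 * (q % 2 * (if x then 1 else 0) + q % 2 * (if y then 1 else 0))))) := by
  have hI := one_add_I_ne_zero
  rcases Int.even_or_odd q with h | h
  · rw [Int.even_iff.mp h]
    cases x <;> cases y <;> simp [h.neg_one_zpow, hI]
  · rw [Int.odd_iff.mp h]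
    cases x <;> cases y <;> field_simp <;> simp [h.neg_one_zpow] <;> linear_combination I_sq

namespace RBMRepresentable

variable {n m m₁ m₂ : ℕ} {f g : (Fin n → Bool) → ℂ}

theorem one_s16 : RBMRepresentable n 0 fun _ => 1 :=
  ⟨1, 0, Fin.elim0, fun _ => Fin.elim0, one_ne_zero, by simp⟩

theorem const_mul {c : ℂ} (hc : c ≠ 0) (hf : RBMRepresentable n m f) :
    RBMRepresentable n m fun v => c * f v := by
  obtain ⟨C, a, b, W, hC, hf⟩ := hf
  exact ⟨c * C, a, b, W, mul_ne_zero hc hC, fun v => by simp only [hf]; ring⟩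

theorem mul_s16 (hf : RBMRepresentable n m₁ f) (hg : RBMRepresentable n m₂ g) :
    RBMRepresentable n (m₁ + m₂) fun v => f v * g v := by
  obtain ⟨C₁, a₁, b₁, W₁, hC₁, hf⟩ := hf
  obtain ⟨C₂, a₂, b₂, W₂, hC₂, hg⟩ := hg
  refine ⟨C₁ * C₂, a₁ + a₂, Fin.append b₁ b₂, fun i => Fin.append (W₁ i) (W₂ i),
    mul_ne_zero hC₁ hC₂, fun v => ?_⟩
  simp only [hf, hg, Fin.prod_univ_add, Fin.append_left, Fin.append_right, Pi.add_apply, add_mul,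
    sum_add_distrib, Complex.exp_add]
  ring

theorem prod_s16 {ι : Type*} (s : Finset ι) (m : ι → ℕ) (f : ι → (Fin n → Bool) → ℂ)
    (hf : ∀ i ∈ s, RBMRepresentable n (m i) (f i)) :
    RBMRepresentable n (∑ i ∈ s, m i) fun v => ∏ i ∈ s, f i v := by
  induction s using Finset.cons_induction with
  | empty => exact one_s16
  | cons i s _ ih =>
    simp only [sum_cons, prod_cons]
    exact (hf i (mem_cons_self i s)).mul_s16 (ih fun j hj => hf j (mem_cons_of_mem hj))

theorem I_zpow_affine (l₀ : ℤ) (l : Fin n → ℤ) :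
    RBMRepresentable n 0 fun v => I ^ (l₀ + ∑ i, l i * (if v i then 1 else 0)) := by
  refine ⟨exp (l₀ * (π / 2 * I)), fun i => l i * (π / 2 * I), Fin.elim0, fun _ => Fin.elim0,
    exp_ne_zero _, fun v => ?_⟩
  dsimp only
  rw [← exp_affine_mul_pi_div_two_mul_I, Complex.exp_add]
  simp

theorem one_add_I_zpow_affine (l₀ : ℤ) (l : Fin n → ℤ) :
    RBMRepresentable n 1 fun v => 1 + I ^ (l₀ + ∑ i, l i * (if v i then 1 else 0)) := by
  refine ⟨1, 0, fun _ => l₀ * (π / 2 * I), fun i _ => l i * (π / 2 * I), one_ne_zero,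
    fun v => ?_⟩
  dsimp only
  rw [← exp_affine_mul_pi_div_two_mul_I]
  simp

theorem neg_one_zpow_mul_mul (q : ℤ) (i j : Fin n) :
    RBMRepresentable n 1 fun v =>
      (-1 : ℂ) ^ (q * (if v i then 1 else 0) * (if v j then 1 else 0)) := by
  set w : Fin n → ℤ := Pi.single i (q % 2) + Pi.single j (q % 2)
  have hw (v : Fin n → Bool) : ∑ k, w k * (if v k then 1 else 0) =
      q % 2 * (if v i then 1 else 0) + q % 2 * (if v j then 1 else 0) := by
    simp only [w, Pi.add_apply, add_mul, sum_add_distrib, Pi.single_apply, ite_mul, zero_mul,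
      sum_ite_eq', mem_univ, if_true]
  have h2w (v : Fin n → Bool) : ∑ k, 2 * w k * (if v k then 1 else 0) =
      2 * (q % 2 * (if v i then 1 else 0) + q % 2 * (if v j then 1 else 0)) := by
    simp_rw [mul_assoc, ← mul_sum, hw]
  have h := ((I_zpow_affine 0 w).mul_s16 (one_add_I_zpow_affine 1 fun k => 2 * w k)).const_mul
    (inv_ne_zero one_add_I_ne_zero)
  simp only [zero_add, hw, h2w] at h
  convert h using 2 with v
  exact Complex.neg_one_zpow_mul_mul q (v i) (v j)

theorem neg_one_zpow_quadratic (q : Fin n → Fin n → ℤ) :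
    RBMRepresentable n (n * (n - 1) / 2) fun v => (-1 : ℂ) ^ (∑ i, ∑ j,
      if i < j then q i j * (if v i then 1 else 0) * (if v j then 1 else 0) else 0) := by
  rw [← Fin.sum_sum_ite_lt]
  simp_rw [zpow_sum₀ (neg_ne_zero.2 (one_ne_zero (α := ℂ))),
    apply_ite (fun k : ℤ => (-1 : ℂ) ^ k), zpow_zero]
  refine prod_s16 _ _ _ fun i _ => prod_s16 _ _ _ fun j _ => ?_
  split_ifs
  · exact neg_one_zpow_mul_mul (q i j) i j
  · exact one_s16

theorem ite_affine_emod_two_eq_zero (L₀ : ℤ) (L : Fin n → ℤ) :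
    RBMRepresentable n 1 fun v =>
      if (L₀ + ∑ i, L i * (if v i then 1 else 0)) % 2 = 0 then 1 else 0 := by
  simp_rw [Complex.ite_emod_two_eq_inv_two_mul_one_add_I_zpow, mul_add (2 : ℤ), mul_sum,
    ← mul_assoc]
  exact (one_add_I_zpow_affine _ _).const_mul (inv_ne_zero two_ne_zero)

end RBMRepresentable

/-- For any affine form `l(v) = l0 + ∑ lc i · v i`, quadratic form
`q(v) = ∑_{i<j} q i j · v i v j` and affine forms `L_j(v) = L0 j + ∑ Lc j i · v i` with
integer coefficients, the Pauli-stabilizer-type amplitude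
`Ψ(v) = i^{l(v)} (−1)^{q(v)} ∏_j [L_j(v) ≡ 0 (mod 2)]` is exactly representable by an RBM
with at most `n(n−1)/2 + r` hidden neurons. -/
theorem pauli_stabilizer_amplitude_representable
    (n r : ℕ) (l0 : ℤ) (lc : Fin n → ℤ) (q : Fin n → Fin n → ℤ)
    (L0 : Fin r → ℤ) (Lc : Fin r → Fin n → ℤ) :
    ∃ m ≤ n * (n - 1) / 2 + r,
      RBMRepresentable n m (fun v =>
        Complex.I ^ (l0 + ∑ i, lc i * (if v i then 1 else 0)) *
          (-1 : ℂ) ^ (∑ i, ∑ j,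
            if i < j then q i j * (if v i then 1 else 0) * (if v j then 1 else 0) else 0) *
          ∏ j : Fin r,
            (if (L0 j + ∑ i, Lc j i * (if v i then 1 else 0)) % 2 = 0 then 1 else 0)) := by
  refine ⟨0 + n * (n - 1) / 2 + ∑ _j : Fin r, 1, by simp, ?_⟩
  exact ((RBMRepresentable.I_zpow_affine l0 lc).mul_s16
    (RBMRepresentable.neg_one_zpow_quadratic q)).mul_s16
    (RBMRepresentable.prod_s16 univ _ _ fun j _ =>
      RBMRepresentable.ite_affine_emod_two_eq_zero (L0 j) (Lc j))
end

section
/- Let A_{−1} = X, A_{0} = Y, A_{+1} = Z be the 2×2 Pauli matrices over ℂ. For n ≥ 1 define the unary-encoded AKLT amplitude function Ψ_n : {0,1}^{3n} → ℂ as follows: if for every j ∈ {1,…,n} the triple (v_{3j−2}, v_{3j−1}, v_{3j}) has exactly one entry equal to 1, let a_j = −1, 0, or +1 according to whether the first, second, or third entry of the j-th triple is 1, and set Ψ_n(v) = Tr(A_{a_1} A_{a_2} ⋯ A_{a_n}); otherwise set Ψ_n(v) = 0. Then there exists a constant C ∈ ℕ, independent of n, such that for all n ≥ 1, Ψ_n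 is exactly representable by an RBM with at most C·n hidden neurons. -/
open Complex Matrix

/-- The Pauli matrix `X = A_{−1}`. -/
def pauliX : Matrix (Fin 2) (Fin 2) ℂ := !![0, 1; 1, 0]

/-- The Pauli matrix `Y = A_{0}`. -/
noncomputable def pauliY : Matrix (Fin 2) (Fin 2) ℂ := !![0, -Complex.I; Complex.I, 0]

/-- The Pauli matrix `Z = A_{+1}`. -/
def pauliZ : Matrix (Fin 2) (Fin 2) ℂ := !![1, 0; 0, -1]

/-- The matrix `A_{a_j}` assigned to a unary-encoded triple `(b0, b1, b2)` of Hamming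
weight one: `(1,0,0) ↦ A_{−1} = X`, `(0,1,0) ↦ A_{0} = Y`, `(0,0,1) ↦ A_{+1} = Z`. -/
noncomputable def akltMat (b0 b1 b2 : Bool) : Matrix (Fin 2) (Fin 2) ℂ :=
  if b0 then pauliX else if b1 then pauliY else pauliZ

/-- The unary-encoded AKLT amplitude function on `3n` binary neurons: if every consecutive
triple `(v_{3j}, v_{3j+1}, v_{3j+2})` has exactly one entry equal to `1`, it is the trace of
the ordered product `A_{a_1} A_{a_2} ⋯ A_{a_n}` of the corresponding Pauli matrices, and it
vanishes otherwise. -/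
noncomputable def akltAmp (n : ℕ) (v : Fin (3 * n) → Bool) : ℂ :=
  if ∀ j : Fin n,
      ((if v ⟨3 * j.1, by have := j.2; omega⟩ then 1 else 0) +
        (if v ⟨3 * j.1 + 1, by have := j.2; omega⟩ then 1 else 0) +
        (if v ⟨3 * j.1 + 2, by have := j.2; omega⟩ then 1 else 0) : ℕ) = 1 then
    Matrix.trace
      (((List.finRange n).map fun j =>
        akltMat (v ⟨3 * j.1, by have := j.2; omega⟩)
          (v ⟨3 * j.1 + 1, by have := j.2; omega⟩)
          (v ⟨3 * j.1 + 2, by have := j.2; omega⟩)).prod)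
  else 0

/-!
Writing `Y = i X Z`, each site matrix is `i^y X^x Z^z` with `x, y, z ∈ {0, 1}` read off the unary
code, and moving every `X` to the left of every `Z` (`Z X = -X Z`) gives
`Tr (A_{a_1} ⋯ A_{a_n}) = (∏ j, i^{y_j} (-1)^{x_j G_j}) (1 + (-1)^{∑ x_j}) (1 + (-1)^{∑ z_j}) / 2`
with `G_j = ∑_{j' < j} z_{j'}`. An RBM hidden unit with `b = log β`, `W = log ω` contributes the
factor `1 + β ∏ᵢ ω_i^{v_i}`, and every factor above is a product of such units. Per site, the
three units `1 - 2^w / 2^e` (`e = 0, 2, 3`, `w` the Hamming weight of the site) have a product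
vanishing unless `w = 1`, and two units produce `-3 (-1/2)^{x_j} (-1)^{x_j G_j}`, which the visible
biases turn into `-3 i^{y_j} (-1)^{x_j G_j}`; two global units give the parity factors. This uses
`5n + 2 ≤ 7n` hidden units.
-/

open Finset

section RBM

variable {ι κ : Type*} [Fintype ι] [Fintype κ]

def IsRBM (H : Type*) [Fintype H] (f : (ι → Bool) → ℂ) : Prop :=
  ∃ (C : ℂ) (a : ι → ℂ) (b : H → ℂ) (W : ι → H → ℂ),
    C ≠ 0 ∧ ∀ v : ι → Bool,
      f v = C * Complex.exp (∑ i, a i * (if v i then 1 else 0)) *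
        ∏ h, (1 + Complex.exp (b h + ∑ i, W i h * (if v i then 1 else 0)))

def boolProd (ω : ι → ℂ) (v : ι → Bool) : ℂ := ∏ i, if v i then ω i else 1

lemma exp_sum_mul_ite (a : ι → ℂ) (v : ι → Bool) :
    Complex.exp (∑ i, a i * (if v i then 1 else 0)) = boolProd (fun i => Complex.exp (a i)) v := by
  rw [Complex.exp_sum, boolProd]
  congr! 1 with i
  split_ifs <;> simp

lemma IsRBM.rbmRepresentable {n : ℕ} {H : Type*} [Fintype H] {f : (Fin n → Bool) → ℂ}
    (hf : IsRBM H f) : RBMRepresentable n (Fintype.card H) f := by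
  obtain ⟨C, a, b, W, hC, hf⟩ := hf
  let e := (Fintype.equivFin H).symm
  refine ⟨C, a, b ∘ e, fun i => W i ∘ e, hC, fun v => ?_⟩
  rw [hf v, ← e.prod_comp]
  rfl

lemma IsRBM.comp {H : Type*} [Fintype H] {f : (κ → Bool) → ℂ} (hf : IsRBM H f)
    [DecidableEq ι] (σ : κ → ι) : IsRBM H (fun v : ι → Bool => f (v ∘ σ)) := by
  obtain ⟨C, a, b, W, hC, hf⟩ := hf
  have pull (c : κ → ℂ) (v : ι → Bool) :
      ∑ i, (∑ k with σ k = i, c k) * (if v i then 1 else 0) =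
        ∑ k, c k * (if (v ∘ σ) k then 1 else 0) := by
    rw [← sum_fiberwise univ σ]
    refine sum_congr rfl fun i _ => ?_
    rw [sum_mul]
    refine sum_congr rfl fun k hk => ?_
    obtain rfl := (mem_filter.1 hk).2
    rfl
  refine ⟨C, fun i => ∑ k with σ k = i, a k, b, fun i h => ∑ k with σ k = i, W k h, hC,
    fun v => ?_⟩
  simp only [pull, hf]

lemma IsRBM.const_mul {H : Type*} [Fintype H] {f : (ι → Bool) → ℂ} (hf : IsRBM H f)
    {c : ℂ} (hc : c ≠ 0) : IsRBM H (fun v => c * f v) := by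
  obtain ⟨C, a, b, W, hC, hf⟩ := hf
  exact ⟨c * C, a, b, W, mul_ne_zero hc hC, fun v => by simp only [hf]; ring⟩

lemma IsRBM.mul {H H' : Type*} [Fintype H] [Fintype H'] {f g : (ι → Bool) → ℂ}
    (hf : IsRBM H f) (hg : IsRBM H' g) : IsRBM (H ⊕ H') (fun v => f v * g v) := by
  obtain ⟨C, a, b, W, hC, hf⟩ := hf
  obtain ⟨C', a', b', W', hC', hg⟩ := hg
  refine ⟨C * C', a + a', Sum.elim b b', fun i => Sum.elim (W i) (W' i), mul_ne_zero hC hC',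
    fun v => ?_⟩
  simp only [hf, hg, Pi.add_apply, add_mul, sum_add_distrib, Complex.exp_add,
    Fintype.prod_sum_type, Sum.elim_inl, Sum.elim_inr]
  ring

lemma IsRBM.prod {J H : Type*} [Fintype J] [Fintype H] {f : J → (ι → Bool) → ℂ}
    (hf : ∀ j, IsRBM H (f j)) : IsRBM (J × H) (fun v => ∏ j, f j v) := by
  choose C a b W hC hf using hf
  refine ⟨∏ j, C j, fun i => ∑ j, a j i, fun p => b p.1 p.2, fun i p => W p.1 i p.2,
    prod_ne_zero_iff.2 fun j _ => hC j, fun v => ?_⟩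
  have exp_sum_sum : Complex.exp (∑ i, (∑ j, a j i) * (if v i then 1 else 0)) =
      ∏ j, Complex.exp (∑ i, a j i * (if v i then 1 else 0)) := by
    simp only [sum_mul]
    rw [sum_comm, Complex.exp_sum]
  simp only [hf, exp_sum_sum, Fintype.prod_prod_type, prod_mul_distrib]

lemma isRBM_boolProd {α : ι → ℂ} (hα : ∀ i, α i ≠ 0) : IsRBM Empty (boolProd α) :=
  ⟨1, fun i => Complex.log (α i), Empty.elim, fun _ => Empty.elim, one_ne_zero, fun v => by
    rw [exp_sum_mul_ite]
    simp only [Complex.exp_log (hα _), univ_eq_empty, prod_empty, one_mul, mul_one]⟩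

def rbmUnit (β : ℂ) (ω : ι → ℂ) (v : ι → Bool) : ℂ := 1 + β * boolProd ω v

lemma isRBM_rbmUnit {β : ℂ} {ω : ι → ℂ} (hβ : β ≠ 0) (hω : ∀ i, ω i ≠ 0) :
    IsRBM Unit (rbmUnit β ω) :=
  ⟨1, 0, fun _ => Complex.log β, fun i _ => Complex.log (ω i), one_ne_zero, fun v => by
    rw [Fintype.prod_unique, Complex.exp_add, Complex.exp_log hβ]
    simp only [rbmUnit, exp_sum_mul_ite, Complex.exp_log (hω _), Pi.zero_apply,
      Complex.exp_zero, boolProd, ite_self, prod_const_one, one_mul]⟩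

end RBM

lemma pow_mul_pow_of_mul_eq_neg {R : Type*} [Ring R] {a b : R} (h : b * a = -(a * b))
    (p q : ℕ) : b ^ q * a ^ p = (-1) ^ (q * p) * (a ^ p * b ^ q) := by
  have h₁ : ∀ p : ℕ, b * a ^ p = (-1) ^ p * (a ^ p * b) := by
    intro p
    induction p with
    | zero => simp
    | succ p ih =>
      rw [pow_succ, ← mul_assoc, ih, mul_assoc, mul_assoc, h, pow_succ]
      noncomm_ring
  induction q with
  | zero => simp
  | succ q ih =>
    rw [pow_succ, mul_assoc, h₁, ← mul_assoc, ((Commute.neg_one_right _).pow_right p).eq,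
      mul_assoc, ← mul_assoc (b ^ q), ih, add_one_mul, pow_add,
      ((Commute.neg_one_left _).pow_pow _ _).eq]
    simp only [mul_assoc]

lemma pow_eq_pow_mod_two {M : Type*} [Monoid M] {a : M} (h : a * a = 1) (p : ℕ) :
    a ^ p = a ^ (p % 2) := by
  conv_lhs => rw [← Nat.mod_add_div p 2, pow_add, pow_mul, sq, h, one_pow, mul_one]

lemma pauliX_mul_self : pauliX * pauliX = 1 := by
  ext i j; fin_cases i <;> fin_cases j <;> simp [pauliX, Matrix.mul_apply]

lemma pauliZ_mul_self : pauliZ * pauliZ = 1 := by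
  ext i j; fin_cases i <;> fin_cases j <;> simp [pauliZ, Matrix.mul_apply]

lemma pauliZ_mul_pauliX : pauliZ * pauliX = -(pauliX * pauliZ) := by
  ext i j; fin_cases i <;> fin_cases j <;> simp [pauliX, pauliZ, Matrix.mul_apply]

lemma neg_one_pow_mul_eq_smul {A : Type*} [Ring A] [Module ℂ A] (k : ℕ) (x : A) :
    (-1) ^ k * x = (-1 : ℂ) ^ k • x := by
  rcases Nat.even_or_odd k with hk | hk <;> simp [hk.neg_one_pow]

lemma pauliXZ_mul_pauliXZ (p q p' q' : ℕ) :
    pauliX ^ p * pauliZ ^ q * (pauliX ^ p' * pauliZ ^ q') =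
      (-1 : ℂ) ^ (q * p') • (pauliX ^ (p + p') * pauliZ ^ (q + q')) := by
  rw [mul_assoc, ← mul_assoc (pauliZ ^ q),
    pow_mul_pow_of_mul_eq_neg pauliZ_mul_pauliX, neg_one_pow_mul_eq_smul, pow_add, pow_add]
  simp only [Matrix.mul_smul, Matrix.smul_mul, mul_assoc]

lemma trace_pauliX_pow_mul_pauliZ_pow (p q : ℕ) :
    (pauliX ^ p * pauliZ ^ q).trace = (1 + (-1) ^ p) * (1 + (-1) ^ q) / 2 := by
  rw [pow_eq_pow_mod_two pauliX_mul_self, pow_eq_pow_mod_two pauliZ_mul_self,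
    pow_eq_pow_mod_two (a := (-1 : ℂ)) (by norm_num) p,
    pow_eq_pow_mod_two (a := (-1 : ℂ)) (by norm_num) q]
  rcases Nat.mod_two_eq_zero_or_one p with hp | hp <;>
  rcases Nat.mod_two_eq_zero_or_one q with hq | hq <;>
  simp [hp, hq, pauliX, pauliZ, Matrix.trace_fin_two]
  norm_num

noncomputable def pauli : Fin 3 → Matrix (Fin 2) (Fin 2) ℂ := ![pauliX, pauliY, pauliZ]

def xPow : Fin 3 → ℕ := ![1, 1, 0]
def zPow : Fin 3 → ℕ := ![0, 1, 1]
def iPow : Fin 3 → ℕ := ![0, 1, 0]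

lemma pauli_eq_smul (k : Fin 3) :
    pauli k = Complex.I ^ iPow k • (pauliX ^ xPow k * pauliZ ^ zPow k) := by
  fin_cases k <;> ext i j <;> fin_cases i <;> fin_cases j <;>
    simp [pauli, xPow, zPow, iPow, pauliX, pauliY, pauliZ]

def zBelow {n : ℕ} (a : Fin n → Fin 3) (j : Fin n) : ℕ := ∑ j' ∈ Iio j, zPow (a j')

lemma zBelow_castSucc {n : ℕ} (a : Fin (n + 1) → Fin 3) (j : Fin n) :
    zBelow a j.castSucc = zBelow (fun j' => a j'.castSucc) j := by
  rw [zBelow, Fin.Iio_castSucc, sum_map]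
  rfl

lemma zBelow_last {n : ℕ} (a : Fin (n + 1) → Fin 3) :
    zBelow a (Fin.last n) = ∑ j : Fin n, zPow (a j.castSucc) := by
  rw [zBelow, Fin.Iio_last_eq_map, sum_map]
  rfl

def pauliPhase {n : ℕ} (a : Fin n → Fin 3) (j : Fin n) : ℂ :=
  Complex.I ^ iPow (a j) * (-1) ^ (zBelow a j * xPow (a j))

lemma prod_ofFn_pauli {n : ℕ} (a : Fin n → Fin 3) :
    (List.ofFn fun j => pauli (a j)).prod =
      (∏ j, pauliPhase a j) • (pauliX ^ (∑ j, xPow (a j)) * pauliZ ^ (∑ j, zPow (a j))) := by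
  induction n with
  | zero => simp
  | succ n ih =>
    rw [List.ofFn_succ', List.prod_concat, ih fun j => a j.castSucc, pauli_eq_smul,
      Matrix.smul_mul, Matrix.mul_smul, pauliXZ_mul_pauliXZ, smul_smul, smul_smul,
      Fin.prod_univ_castSucc, Fin.sum_univ_castSucc, Fin.sum_univ_castSucc]
    simp only [pauliPhase, zBelow_castSucc, zBelow_last]
    congr 1
    ring

lemma trace_prod_ofFn_pauli {n : ℕ} (a : Fin n → Fin 3) :
    (List.ofFn fun j => pauli (a j)).prod.trace =
      (∏ j, pauliPhase a j) *
        ((1 + (-1) ^ (∑ j, xPow (a j))) * (1 + (-1) ^ (∑ j, zPow (a j))) / 2) := by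
  rw [prod_ofFn_pauli, Matrix.trace_smul, trace_pauliX_pow_mul_pauliZ_pow, smul_eq_mul]

def oneHot {J K : Type*} [DecidableEq K] (a : J → K) (p : J × K) : Bool := decide (a p.1 = p.2)

lemma boolProd_oneHot {J K : Type*} [Fintype J] [Fintype K] [DecidableEq K]
    (ω : J × K → ℂ) (a : J → K) : boolProd ω (oneHot a) = ∏ j, ω (j, a j) := by
  simp [boolProd, oneHot, Fintype.prod_prod_type]

lemma boolProd_mul {ι : Type*} [Fintype ι] (ω ω' : ι → ℂ) (v : ι → Bool) :
    boolProd (ω * ω') v = boolProd ω v * boolProd ω' v := by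
  rw [boolProd, boolProd, boolProd, ← prod_mul_distrib]
  congr! 1 with i
  split_ifs <;> simp

def hotCount (b : Fin 3 → Bool) : ℕ :=
  (if b 0 then 1 else 0) + (if b 1 then 1 else 0) + (if b 2 then 1 else 0)

lemma exists_eq_decide_of_hotCount_eq_one {b : Fin 3 → Bool} (hb : hotCount b = 1) :
    ∃ k, ∀ k', b k' = decide (k = k') := by
  revert b
  simp only [Fin.forall_fin_succ_pi, Fin.forall_fin_zero_pi]
  decide

def oneHotIndicator (b : Fin 3 → Bool) : ℂ := if hotCount b = 1 then 1 else 0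

lemma oneHotIndicator_eq (b : Fin 3 → Bool) :
    oneHotIndicator b = -(8 / 3) * (rbmUnit (-1) (fun _ => 2) b *
      (rbmUnit (-4⁻¹) (fun _ => 2) b * rbmUnit (-8⁻¹) (fun _ => 2) b)) := by
  revert b
  simp only [Fin.forall_fin_succ_pi, Fin.forall_fin_zero_pi]
  intro x y z
  cases x <;> cases y <;> cases z <;>
    simp [oneHotIndicator, hotCount, rbmUnit, boolProd, Fin.prod_univ_three] <;> norm_num

section Trace

variable {n : ℕ}

noncomputable def visibleWeight (k : Fin 3) : ℂ := ![-2, -2 * Complex.I, 1] k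

def signWeight (j : Fin n) (p : Fin n × Fin 3) : ℂ := if p.1 < j then (-1) ^ zPow p.2 else 1

noncomputable def localWeight (j : Fin n) (p : Fin n × Fin 3) : ℂ :=
  if p.1 = j then 4⁻¹ ^ xPow p.2 else 1

lemma boolProd_signWeight_oneHot (j : Fin n) (a : Fin n → Fin 3) :
    boolProd (signWeight j) (oneHot a) = (-1) ^ zBelow a j := by
  rw [boolProd_oneHot, zBelow, ← prod_pow_eq_pow_sum, ← filter_gt_eq_Iio, prod_filter]
  rfl

lemma boolProd_localWeight_oneHot (j : Fin n) (a : Fin n → Fin 3) :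
    boolProd (localWeight j) (oneHot a) = 4⁻¹ ^ xPow (a j) := by
  simp [boolProd_oneHot, localWeight]

lemma visibleWeight_mul_signUnits (k : Fin 3) (m : ℕ) :
    visibleWeight k * ((1 + 2 * (-1) ^ m) * (1 + -2 * ((-1) ^ m * 4⁻¹ ^ xPow k))) =
      -3 * (Complex.I ^ iPow k * (-1) ^ (m * xPow k)) := by
  rw [pow_mul]
  rcases neg_one_pow_eq_or ℂ m with h | h <;> rw [h] <;> fin_cases k <;>
    simp [visibleWeight, xPow, iPow] <;> ring

noncomputable def traceRBM (n : ℕ) (u : Fin n × Fin 3 → Bool) : ℂ :=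
  (2⁻¹ * (-3)⁻¹ ^ n) * boolProd (fun p => visibleWeight p.2) u *
    (∏ j, rbmUnit 2 (signWeight j) u * rbmUnit (-2) (signWeight j * localWeight j) u) *
    (rbmUnit 1 (fun p => (-1) ^ xPow p.2) u * rbmUnit 1 (fun p => (-1) ^ zPow p.2) u)

lemma traceRBM_oneHot (a : Fin n → Fin 3) :
    traceRBM n (oneHot a) = (List.ofFn fun j => pauli (a j)).prod.trace := by
  have hsite (j : Fin n) : visibleWeight (a j) * (rbmUnit 2 (signWeight j) (oneHot a) *
      rbmUnit (-2) (signWeight j * localWeight j) (oneHot a)) = -3 * pauliPhase a j := by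
    rw [rbmUnit, rbmUnit, boolProd_mul, boolProd_signWeight_oneHot,
      boolProd_localWeight_oneHot, visibleWeight_mul_signUnits, pauliPhase]
  have hshape : traceRBM n (oneHot a) = (2⁻¹ * (-3)⁻¹ ^ n) *
      (∏ j, visibleWeight (a j) * (rbmUnit 2 (signWeight j) (oneHot a) *
        rbmUnit (-2) (signWeight j * localWeight j) (oneHot a))) *
      (rbmUnit 1 (fun p => (-1) ^ xPow p.2) (oneHot a) *
        rbmUnit 1 (fun p => (-1) ^ zPow p.2) (oneHot a)) := by
    simp only [traceRBM, boolProd_oneHot, prod_mul_distrib]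
    ring
  rw [trace_prod_ofFn_pauli, hshape, prod_congr rfl fun j _ => hsite j, prod_mul_distrib,
    prod_const, card_univ, Fintype.card_fin]
  simp only [rbmUnit, boolProd_oneHot, prod_pow_eq_pow_sum, one_mul, inv_pow]
  field_simp

lemma isRBM_traceRBM (n : ℕ) :
    IsRBM ((Empty ⊕ Fin n × (Unit ⊕ Unit)) ⊕ (Unit ⊕ Unit)) (traceRBM n) := by
  have hvis (p : Fin n × Fin 3) : visibleWeight p.2 ≠ 0 := by
    obtain ⟨j, k⟩ := p
    fin_cases k <;> simp [visibleWeight]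
  have hsign (j : Fin n) (p : Fin n × Fin 3) : signWeight j p ≠ 0 := by
    unfold signWeight; split_ifs <;> simp
  have hlocal (j : Fin n) (p : Fin n × Fin 3) : localWeight j p ≠ 0 := by
    unfold localWeight; split_ifs <;> simp
  exact (((isRBM_boolProd hvis).const_mul (by simp)).mul (IsRBM.prod fun j =>
    (isRBM_rbmUnit two_ne_zero (hsign j)).mul
      (isRBM_rbmUnit (by norm_num) fun p => mul_ne_zero (hsign j p) (hlocal j p)))).mul
    ((isRBM_rbmUnit one_ne_zero (by simp)).mul (isRBM_rbmUnit one_ne_zero (by simp)))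

end Trace

noncomputable def akltRBM (n : ℕ) (u : Fin n × Fin 3 → Bool) : ℂ :=
  (∏ j, oneHotIndicator (u ∘ Prod.mk j)) * traceRBM n u

lemma isRBM_akltRBM (n : ℕ) :
    IsRBM ((Fin n × (Unit ⊕ Unit ⊕ Unit)) ⊕ ((Empty ⊕ Fin n × (Unit ⊕ Unit)) ⊕ (Unit ⊕ Unit)))
      (akltRBM n) := by
  have hind : IsRBM (Unit ⊕ Unit ⊕ Unit) oneHotIndicator := by
    rw [funext oneHotIndicator_eq]
    refine IsRBM.const_mul ?_ (by norm_num)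
    exact (isRBM_rbmUnit (by norm_num) (by simp)).mul
      ((isRBM_rbmUnit (by norm_num) (by simp)).mul (isRBM_rbmUnit (by norm_num) (by simp)))
  exact (IsRBM.prod fun j => hind.comp (Prod.mk j)).mul (isRBM_traceRBM n)

def tripleIdx {n : ℕ} (p : Fin n × Fin 3) : Fin (3 * n) := ⟨3 * p.1 + p.2, by omega⟩

lemma akltMat_decide (k : Fin 3) :
    akltMat (decide (k = 0)) (decide (k = 1)) (decide (k = 2)) = pauli k := by
  fin_cases k <;> rfl

lemma akltAmp_eq (n : ℕ) (v : Fin (3 * n) → Bool) :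
    akltAmp n v = akltRBM n (v ∘ tripleIdx) := by
  unfold akltAmp
  split_ifs with hv
  · choose a ha using fun j =>
      exists_eq_decide_of_hotCount_eq_one (b := fun k => v (tripleIdx (j, k))) (hv j)
    have hu : v ∘ tripleIdx = oneHot a := funext fun p => ha p.1 p.2
    have hmat (j : Fin n) : akltMat (v (tripleIdx (j, 0))) (v (tripleIdx (j, 1)))
        (v (tripleIdx (j, 2))) = pauli (a j) := by
      rw [ha, ha, ha, akltMat_decide]
    have hind (j : Fin n) : oneHotIndicator ((v ∘ tripleIdx) ∘ Prod.mk j) = 1 := if_pos (hv j)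
    rw [akltRBM, prod_eq_one fun j _ => hind j, one_mul, hu, traceRBM_oneHot,
      List.ofFn_eq_map]
    exact congrArg (fun l => (List.prod l).trace) (List.map_congr_left fun j _ => hmat j)
  · obtain ⟨j, hj⟩ := not_forall.1 hv
    have hind : oneHotIndicator ((v ∘ tripleIdx) ∘ Prod.mk j) = 0 := if_neg hj
    rw [akltRBM, prod_eq_zero (mem_univ j) hind, zero_mul]

lemma akltAmp_rbmRepresentable (n : ℕ) : RBMRepresentable (3 * n) (5 * n + 2) (akltAmp n) := by
  have h := ((isRBM_akltRBM n).comp tripleIdx).rbmRepresentable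
  rw [show akltAmp n = fun v => akltRBM n (v ∘ tripleIdx) from funext (akltAmp_eq n)]
  convert h using 1
  simp only [Fintype.card_sum, Fintype.card_prod, Fintype.card_fin, Fintype.card_unit,
    Fintype.card_empty]
  ring

/-- There is a constant `C`, independent of `n`, such that for every `n ≥ 1`
the unary-encoded AKLT amplitude function `Ψ_n` on `3n` binary neurons is exactly
representable by an RBM with at most `C·n` hidden neurons. -/
theorem aklt_state_representable :
    ∃ C : ℕ, ∀ n : ℕ, 1 ≤ n → ∃ m ≤ C * n, RBMRepresentable (3 * n) m (akltAmp n) :=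
  ⟨7, fun n hn => ⟨5 * n + 2, by omega, akltAmp_rbmRepresentable n⟩⟩
end
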